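/- For row standard ν-tableaux v and v̂ (ν a multicomposition of n), v ⊵ v̂ if and only if d(v) ≤ d(v̂) in the Bruhat order on S_n. -/

import Mathlib

open scoped Classical

noncomputable section

namespace SpechtInduction

/-- A node `(l, r, c)`: component `l`, row `r`, column `c` (all 0-indexed). -/
abbrev Node : Type := ℕ × ℕ × ℕ

/-- A multicomposition of `n` with `ℓ` components, each a list of row lengths. -/
structure Multicomp (ℓ n : ℕ) where
  parts : List (List ℕ)
  len_eq : parts.length = ℓ
  size_eq : (parts.map List.sum).sum = n

namespace Multicomp

variable {ℓ n : ℕ}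

def rowLen (μ : Multicomp ℓ n) (l r : ℕ) : ℕ := (μ.parts.getD l []).getD r 0

def mem (μ : Multicomp ℓ n) (x : Node) : Prop := x.2.2 < μ.rowLen x.1 x.2.1

def compSize (μ : Multicomp ℓ n) (l : ℕ) : ℕ := (μ.parts.getD l []).sum

/-- The partial sums appearing in the dominance order. -/
def psum (μ : Multicomp ℓ n) (l i : ℕ) : ℕ :=
  (∑ k ∈ Finset.range l, μ.compSize k) + ∑ j ∈ Finset.range i, μ.rowLen l j

/-- The dominance order `lam ⊵ mu` on multicompositions. -/
def Dominates (lam mu : Multicomp ℓ n) : Prop := ∀ l i, mu.psum l i ≤ lam.psum l i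

/-- Each component is a (weakly decreasing) partition. -/
def IsMultipartition (μ : Multicomp ℓ n) : Prop := ∀ l r, μ.rowLen l (r+1) ≤ μ.rowLen l r

end Multicomp

/-- A `μ`-tableau, recorded by the position function sending each entry `k ∈ {1,…,n}`
to the node it occupies: a bijection onto the diagram of `μ`. -/
def IsTableau {ℓ n : ℕ} (μ : Multicomp ℓ n) (pos : ℕ → Node) : Prop :=
  (∀ j k, 1 ≤ j → j ≤ n → 1 ≤ k → k ≤ n → pos j = pos k → j = k) ∧
  (∀ k, 1 ≤ k → k ≤ n → μ.mem (pos k)) ∧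
  (∀ x, μ.mem x → ∃ k, 1 ≤ k ∧ k ≤ n ∧ pos k = x)

/-- Row standard: entries increase along the rows. -/
def RowStandard {ℓ n : ℕ} (μ : Multicomp ℓ n) (pos : ℕ → Node) : Prop :=
  IsTableau μ pos ∧ ∀ j k, 1 ≤ j → j ≤ n → 1 ≤ k → k ≤ n →
    (pos j).1 = (pos k).1 → (pos j).2.1 = (pos k).2.1 → (pos j).2.2 < (pos k).2.2 → j < k

/-- Column standard (= conjugate is row standard): entries increase down the columns. -/
def ColStandard {ℓ n : ℕ} (μ : Multicomp ℓ n) (pos : ℕ → Node) : Prop :=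
  IsTableau μ pos ∧ ∀ j k, 1 ≤ j → j ≤ n → 1 ≤ k → k ≤ n →
    (pos j).1 = (pos k).1 → (pos j).2.2 = (pos k).2.2 → (pos j).2.1 < (pos k).2.1 → j < k

/-- Standard tableau: the tableau and its conjugate are both row standard. -/
def StandardTab {ℓ n : ℕ} (μ : Multicomp ℓ n) (pos : ℕ → Node) : Prop :=
  RowStandard μ pos ∧ ColStandard μ pos

/-- Number of entries `≤ m` lying in row `(l,r)`. -/
def cnt (pos : ℕ → Node) (m l r : ℕ) : ℕ :=
  ((Finset.Icc 1 m).filter fun k => (pos k).1 = l ∧ (pos k).2.1 = r).card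

/-- Number of entries `≤ m` lying in column `c` of component `l`. -/
def ccnt (pos : ℕ → Node) (m l c : ℕ) : ℕ :=
  ((Finset.Icc 1 m).filter fun k => (pos k).1 = l ∧ (pos k).2.2 = c).card

/-- Number of entries `≤ m` lying in component `l`. -/
def compcnt (pos : ℕ → Node) (m l : ℕ) : ℕ :=
  ((Finset.Icc 1 m).filter fun k => (pos k).1 = l).card

/-- Dominance partial sums of the shape `Shape(t_m)` of the subtableau on entries `1,…,m`. -/
def tabPsum (pos : ℕ → Node) (m l i : ℕ) : ℕ :=
  (∑ k ∈ Finset.range l, compcnt pos m k) + ∑ j ∈ Finset.range i, cnt pos m l j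

/-- Dominance order `s ⊵ t` on tableaux with `n` entries:
`Shape(s_m) ⊵ Shape(t_m)` for all `1 ≤ m ≤ n`. -/
def TabDominates (n : ℕ) (s t : ℕ → Node) : Prop :=
  ∀ m l i, 1 ≤ m → m ≤ n → tabPsum t m l i ≤ tabPsum s m l i

/-- Dominance partial sums of the shape of the *conjugate* of the subtableau `pos_m`,
for a tableau with `ℓ` components (components get reversed, rows and columns swapped). -/
def conjPsum (ℓ : ℕ) (pos : ℕ → Node) (m l i : ℕ) : ℕ :=
  (∑ k ∈ Finset.range l, compcnt pos m (ℓ - 1 - k)) +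
    ∑ j ∈ Finset.range i, ccnt pos m (ℓ - 1 - l) j

/-- `t' ⊵ s'`: the conjugate of `t` dominates the conjugate of `s`. -/
def ConjTabDominates (ℓ n : ℕ) (t s : ℕ → Node) : Prop :=
  ∀ m l i, 1 ≤ m → m ≤ n → conjPsum ℓ s m l i ≤ conjPsum ℓ t m l i

/-- `u' ⊵ t`: the conjugate of `u` dominates `t`. -/
def ConjDomTab (ℓ n : ℕ) (u t : ℕ → Node) : Prop :=
  ∀ m l i, 1 ≤ m → m ≤ n → tabPsum t m l i ≤ conjPsum ℓ u m l i

/-- Lexicographic (row reading) order on nodes: by component, then row, then column. -/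
def nodeLex (x y : Node) : Prop :=
  x.1 < y.1 ∨ (x.1 = y.1 ∧ (x.2.1 < y.2.1 ∨ (x.2.1 = y.2.1 ∧ x.2.2 < y.2.2)))

/-- `pos` is the row-reading tableau `t^μ` of `μ`: entries filled in order along
the rows of each component in turn. -/
def IsRowReading {ℓ n : ℕ} (μ : Multicomp ℓ n) (pos : ℕ → Node) : Prop :=
  IsTableau μ pos ∧ ∀ j k, 1 ≤ j → j ≤ n → 1 ≤ k → k ≤ n → (j < k ↔ nodeLex (pos j) (pos k))

/-- Column reading order on nodes: components from last to first, then columns, then rows. -/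
def nodeColLex (x y : Node) : Prop :=
  y.1 < x.1 ∨ (x.1 = y.1 ∧ (x.2.2 < y.2.2 ∨ (x.2.2 = y.2.2 ∧ x.2.1 < y.2.1)))

/-- `pos` is the column-reading tableau `t_μ` of `μ`: entries filled in order down the
columns, from the last component to the first. -/
def IsColReading {ℓ n : ℕ} (μ : Multicomp ℓ n) (pos : ℕ → Node) : Prop :=
  IsTableau μ pos ∧ ∀ j k, 1 ≤ j → j ≤ n → 1 ≤ k → k ≤ n → (j < k ↔ nodeColLex (pos j) (pos k))

/-- `w` lies in the "symmetric group on `{a,…,b}`": it fixes every point outside `[a,b]`. -/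
def FixesOutside (w : Equiv.Perm ℕ) (a b : ℕ) : Prop := ∀ k, k < a ∨ b < k → w k = k

/-- Coxeter length of a permutation of `{1,…,n}`, as the number of inversions. -/
def permLength (n : ℕ) (w : Equiv.Perm ℕ) : ℕ :=
  (((Finset.Icc 1 n) ×ˢ (Finset.Icc 1 n)).filter fun p => p.1 < p.2 ∧ w p.2 < w p.1).card

/-- Right action of a permutation on a tableau (position function). -/
def actTab (pos : ℕ → Node) (w : Equiv.Perm ℕ) : ℕ → Node := fun k => pos (w k)

/-- `d` is the permutation `d(pos)` with `pos = tpos · d`, `tpos` the reference tableau. -/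
def IsDPerm (n : ℕ) (tpos pos : ℕ → Node) (d : Equiv.Perm ℕ) : Prop :=
  FixesOutside d 1 n ∧ ∀ k, 1 ≤ k → k ≤ n → pos k = tpos (d k)

/-- The simple transposition `s_i = (i, i+1)`. -/
def swapP (i : ℕ) : Equiv.Perm ℕ := Equiv.swap i (i + 1)

/-- The product `s_{i₁} ⋯ s_{i_k}` of a word in the Coxeter generators. -/
def wordProd (L : List ℕ) : Equiv.Perm ℕ := (L.map swapP).prod

/-- A reduced word for its product, using generators `s_1,…,s_{n-1}`. -/
def IsReducedWord (n : ℕ) (L : List ℕ) : Prop :=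
  (∀ i ∈ L, 1 ≤ i ∧ i < n) ∧ L.length = permLength n (wordProd L)

/-- Bruhat order on `S_n`: some reduced expression of `u` is a subexpression of some
reduced expression of `w`. -/
def BruhatLE (n : ℕ) (u w : Equiv.Perm ℕ) : Prop :=
  ∃ ww uw : List ℕ, IsReducedWord n ww ∧ wordProd ww = w ∧
    uw.Sublist ww ∧ IsReducedWord n uw ∧ wordProd uw = u

/-- Membership in the Young subgroup `S_μ`: `w` fixes `[1,n]` setwise, preserving each
row of the reference row-reading tableau `tpos = t^μ`. -/
def YoungMem (n : ℕ) (tpos : ℕ → Node) (w : Equiv.Perm ℕ) : Prop :=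
  FixesOutside w 1 n ∧ ∀ k, 1 ≤ k → k ≤ n →
    (tpos (w k)).1 = (tpos k).1 ∧ (tpos (w k)).2.1 = (tpos k).2.1

/-- `accSize μ k = |μ^(1)| + ⋯ + |μ^(k)|`. -/
def accSize {ℓ n : ℕ} (μ : Multicomp ℓ n) (k : ℕ) : ℕ := ∑ j ∈ Finset.range k, μ.compSize j

/-- The content of a node, with `ξinv` a fixed inverse of `ξ`:
`ξ^(c-r) Q_l` if `ξ ≠ 1` and `c - r + Q_l` if `ξ = 1`. -/
def contOfR {R : Type*} [CommRing R] (ξ ξinv : R) (Q : ℕ → R) (x : Node) : R :=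
  if ξ = 1 then ((x.2.2 : R) - (x.2.1 : R)) + Q (x.1 + 1)
  else ξ ^ x.2.2 * ξinv ^ x.2.1 * Q (x.1 + 1)

/-- The set of contents `cont_s(k)` as `s` ranges over all standard tableaux of
multipartitions of `n`. -/
def ContSet (ℓ n : ℕ) {R : Type*} [CommRing R] (ξ ξinv : R) (Q : ℕ → R) (k : ℕ) : Set R :=
  {c | ∃ (μ : Multicomp ℓ n) (pos : ℕ → Node), μ.IsMultipartition ∧ StandardTab μ pos ∧
        c = contOfR ξ ξinv Q (pos k)}

/-- The cyclotomic Hecke algebra of type `G(ℓ,1,n)`: an `R`-algebra `A` equipped with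
generators satisfying the defining relations, together with the elements `T_w` and the
`*` anti-involution fixing the generators. -/
structure Hecke (R : Type*) [CommRing R] (A : Type*) [Ring A] [Algebra R A]
    (n ℓ : ℕ) (ξ : R) (Q : ℕ → R) where
  L : ℕ → A
  T : ℕ → A
  Tw : Equiv.Perm ℕ → A
  star : A →ₗ[R] A
  cyclotomic : ((List.range ℓ).map fun k => L 1 - algebraMap R A (Q (k + 1))).prod = 0
  LL : ∀ r t, L r * L t = L t * L r
  quad : ∀ r, 1 ≤ r → r < n → (T r + 1) * (T r - algebraMap R A ξ) = 0
  TL : ∀ r, 1 ≤ r → r < n →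
      T r * L r + (if ξ = 1 then 1 else 0) = L (r + 1) * (T r - algebraMap R A ξ + 1)
  braid : ∀ s, 1 ≤ s → s + 1 < n → T s * T (s + 1) * T s = T (s + 1) * T s * T (s + 1)
  TLfar : ∀ r t, 1 ≤ r → r < n → t ≠ r → t ≠ r + 1 → T r * L t = L t * T r
  TTfar : ∀ r s, 1 ≤ r → r < n → 1 ≤ s → s < n → (r + 1 < s ∨ s + 1 < r) →
      T r * T s = T s * T r
  Tw_one : Tw 1 = 1
  Tw_mul : ∀ w i, 1 ≤ i → i < n → permLength n w < permLength n (w * swapP i) →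
      Tw (w * swapP i) = Tw w * T i
  star_mul : ∀ a b, star (a * b) = star b * star a
  star_one : star 1 = 1
  star_L : ∀ r, star (L r) = L r
  star_T : ∀ r, star (T r) = T r

namespace Hecke

variable {R : Type*} [CommRing R] {A : Type*} [Ring A] [Algebra R A]
  {n ℓ : ℕ} {ξ : R} {Q : ℕ → R}

/-- `x_μ = Σ_{w ∈ S_μ} T_w`, where `tpos = t^μ`. -/
def xElt (h : Hecke R A n ℓ ξ Q) (tpos : ℕ → Node) : A :=
  ∑ᶠ (w : Equiv.Perm ℕ) (_ : YoungMem n tpos w), h.Tw w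

/-- `y_μ = Σ_{w ∈ S_μ} (-ξ)^{-ℓ(w)} T_w`. -/
def yElt (h : Hecke R A n ℓ ξ Q) (ξinv : R) (tpos : ℕ → Node) : A :=
  ∑ᶠ (w : Equiv.Perm ℕ) (_ : YoungMem n tpos w), ((-ξinv) ^ permLength n w) • h.Tw w

/-- `u⁺_μ = Π_{k=2}^{ℓ} Π_{m=1}^{|μ^(1)|+⋯+|μ^(k-1)|} (L_m - Q_k)`. -/
def uPlus (h : Hecke R A n ℓ ξ Q) (μ : Multicomp ℓ n) : A :=
  ((List.range' 2 (ℓ - 1)).map fun k =>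
    ((List.range' 1 (accSize μ (k - 1))).map fun m => h.L m - algebraMap R A (Q k)).prod).prod

/-- `u⁻_μ = Π_{k=1}^{ℓ-1} Π_{m=1}^{|μ^(1)|+⋯+|μ^(ℓ-k+1)|} (L_m - Q_k)`. -/
def uMinus (h : Hecke R A n ℓ ξ Q) (μ : Multicomp ℓ n) : A :=
  ((List.range' 1 (ℓ - 1)).map fun k =>
    ((List.range' 1 (accSize μ (ℓ - k + 1))).map fun m => h.L m - algebraMap R A (Q k)).prod).prod

/-- `m_μ = u⁺_μ x_μ` (here `tpos = t^μ`). -/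
def mmu (h : Hecke R A n ℓ ξ Q) (μ : Multicomp ℓ n) (tpos : ℕ → Node) : A :=
  h.uPlus μ * h.xElt tpos

/-- `n_μ = u⁻_μ y_μ`. -/
def nmu (h : Hecke R A n ℓ ξ Q) (ξinv : R) (μ : Multicomp ℓ n) (tpos : ℕ → Node) : A :=
  h.uMinus μ * h.yElt ξinv tpos

/-- The Murphy basis element `m_{st} = T_{d(s)}^* m_μ T_{d(t)}`. -/
def mst (h : Hecke R A n ℓ ξ Q) (μ : Multicomp ℓ n) (tpos : ℕ → Node)
    (ds dt : Equiv.Perm ℕ) : A :=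
  h.star (h.Tw ds) * h.mmu μ tpos * h.Tw dt

/-- The dual Murphy basis element `n_{st} = T_{d(s)}^* n_μ T_{d(t)}`. -/
def nst (h : Hecke R A n ℓ ξ Q) (ξinv : R) (μ : Multicomp ℓ n) (tpos : ℕ → Node)
    (ds dt : Equiv.Perm ℕ) : A :=
  h.star (h.Tw ds) * h.nmu ξinv μ tpos * h.Tw dt

end Hecke

/-- The element `F_t = Π_{k=1}^n Π_{c ∈ contents, c ≠ cont_t(k)}
`(L_k - c)/(cont_t(k) - c)` of the split semisimple cyclotomic Hecke algebra. -/
def Ftab {K : Type*} [Field K] {A : Type*} [Ring A] [Algebra K A] {n ℓ : ℕ} {ξ : K}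
    {Q : ℕ → K} (h : Hecke K A n ℓ ξ Q)
    (hfin : ∀ k, (ContSet ℓ n ξ ξ⁻¹ Q k).Finite) (t : ℕ → Node) : A :=
  ((List.range n).map fun k0 =>
    Finset.noncommProd
      (((hfin (k0 + 1)).toFinset).filter fun c => c ≠ contOfR ξ ξ⁻¹ Q (t (k0 + 1)))
      (fun c => algebraMap K A ((contOfR ξ ξ⁻¹ Q (t (k0 + 1)) - c)⁻¹) *
        (h.L (k0 + 1) - algebraMap K A c))
      (by
        intro a _ b _ _
        have hc : ∀ (r : K) (z : A), Commute (algebraMap K A r) z := fun r z =>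
          Algebra.commutes r z
        have c1 : Commute (h.L (k0 + 1) - algebraMap K A a)
            (h.L (k0 + 1) - algebraMap K A b) :=
          Commute.sub_left ((Commute.refl (h.L (k0 + 1))).sub_right ((hc b _).symm))
            (hc a _)
        exact Commute.mul_left (hc _ _)
          (Commute.mul_right ((hc _ _).symm) c1)
        )).prod

/-- The seminormal basis element `f_{st} = F_s m_{st} F_t`.  Here `tpos = t^μ` and
`ds, dt` are the permutations with `s = t^μ d(s)`, `t = t^μ d(t)`. -/
def fElt {K : Type*} [Field K] {A : Type*} [Ring A] [Algebra K A] {n ℓ : ℕ} {ξ : K}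
    {Q : ℕ → K} (h : Hecke K A n ℓ ξ Q)
    (hfin : ∀ k, (ContSet ℓ n ξ ξ⁻¹ Q k).Finite) (μ : Multicomp ℓ n)
    (tpos spos tpos' : ℕ → Node) (ds dt : Equiv.Perm ℕ) : A :=
  Ftab h hfin spos * h.mst μ tpos ds dt * Ftab h hfin tpos'

/-- Semisimplicity of the cyclotomic Hecke algebra, in the equivalent combinatorial form:
contents separate standard tableaux. -/
def SeparatedContents (ℓ n : ℕ) {R : Type*} [CommRing R] (ξ ξinv : R) (Q : ℕ → R) : Prop :=
  ∀ (μ ν : Multicomp ℓ n) (s t : ℕ → Node), μ.IsMultipartition → ν.IsMultipartition →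
    StandardTab μ s → StandardTab ν t →
    (∀ k, 1 ≤ k → k ≤ n → contOfR ξ ξinv Q (s k) = contOfR ξ ξinv Q (t k)) →
    ∀ k, 1 ≤ k → k ≤ n → s k = t k

/-! ## Residues, degrees and the quiver combinatorics -/

/-- The residue of a node: `c - r + κ_l (mod e)`. -/
def resOf (e : ℕ) (κ : ℕ → ℤ) (x : Node) : ZMod e :=
  (((x.2.2 : ℤ) - (x.2.1 : ℤ) + κ x.1 : ℤ) : ZMod e)

/-- The entries of the Cartan matrix of the quiver `Γ_e`. -/
def cartanInt (e : ℕ) (i j : ZMod e) : ℤ :=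
  (if i = j then 2 else 0) + (if j = i + 1 ∧ i ≠ j then -1 else 0) +
    (if j = i - 1 ∧ i ≠ j then -1 else 0)

/-- `x` is an addable node of the shape with row lengths `f` (with `ℓ` components). -/
def AddableNode (f : ℕ → ℕ → ℕ) (ℓ : ℕ) (x : Node) : Prop :=
  x.1 < ℓ ∧ x.2.2 = f x.1 x.2.1 ∧ (x.2.1 = 0 ∨ x.2.2 < f x.1 (x.2.1 - 1))

/-- `x` is a removable node of the shape with row lengths `f`. -/
def RemovableNode (f : ℕ → ℕ → ℕ) (ℓ : ℕ) (x : Node) : Prop :=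
  x.1 < ℓ ∧ x.2.2 + 1 = f x.1 x.2.1 ∧ f x.1 (x.2.1 + 1) ≤ x.2.2

/-- `x` is strictly below `y`. -/
def Below (x y : Node) : Prop := y.1 < x.1 ∨ (x.1 = y.1 ∧ y.2.1 < x.2.1)

/-- A finite region containing all relevant nodes. -/
def nodeRegion (ℓ n : ℕ) : Finset Node :=
  (Finset.range ℓ) ×ˢ (Finset.range (n + 1)) ×ˢ (Finset.range (n + 1))

/-- `d_A(μ) = #{addable i-nodes below A} - #{removable i-nodes below A}` (same residue). -/
def dBelow (e ℓ n : ℕ) (κ : ℕ → ℤ) (f : ℕ → ℕ → ℕ) (A : Node) : ℤ :=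
  ((((nodeRegion ℓ n).filter fun x =>
      AddableNode f ℓ x ∧ resOf e κ x = resOf e κ A ∧ Below x A).card : ℤ)) -
  (((nodeRegion ℓ n).filter fun x =>
      RemovableNode f ℓ x ∧ resOf e κ x = resOf e κ A ∧ Below x A).card : ℤ)

/-- `d^A(μ)`: the same with "above" in place of "below". -/
def dAbove (e ℓ n : ℕ) (κ : ℕ → ℤ) (f : ℕ → ℕ → ℕ) (A : Node) : ℤ :=
  ((((nodeRegion ℓ n).filter fun x =>
      AddableNode f ℓ x ∧ resOf e κ x = resOf e κ A ∧ Below A x).card : ℤ)) -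
  (((nodeRegion ℓ n).filter fun x =>
      RemovableNode f ℓ x ∧ resOf e κ x = resOf e κ A ∧ Below A x).card : ℤ)

/-- The shape (row-length function) of the subtableau of `pos` on entries `1,…,m`. -/
def subShape (pos : ℕ → Node) (m : ℕ) : ℕ → ℕ → ℕ := fun l r => cnt pos m l r

/-- The Brundan–Kleshchev–Wang degree of a standard tableau. -/
def degTab (e ℓ n : ℕ) (κ : ℕ → ℤ) (pos : ℕ → Node) : ℤ :=
  ∑ k ∈ Finset.range n, dBelow e ℓ n κ (subShape pos k) (pos (k + 1))

/-- The codegree of a standard tableau. -/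
def codegTab (e ℓ n : ℕ) (κ : ℕ → ℤ) (pos : ℕ → Node) : ℤ :=
  ∑ k ∈ Finset.range n, dAbove e ℓ n κ (subShape pos k) (pos (k + 1))

/-- `(Λ, β)` where `β = Σ_k α_{res(k)}` for the residue sequence of `pos`. -/
def lamBeta (e ℓ n : ℕ) (κ : ℕ → ℤ) (pos : ℕ → Node) : ℤ :=
  ∑ k ∈ Finset.range n,
    (((Finset.range ℓ).filter fun l => ((κ l : ZMod e)) = resOf e κ (pos (k + 1))).card : ℤ)

/-- `(β, β)` for `β = Σ_k α_{res(k)}`. -/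
def betaBeta (e ℓ n : ℕ) (κ : ℕ → ℤ) (pos : ℕ → Node) : ℤ :=
  ∑ j ∈ Finset.range n, ∑ k ∈ Finset.range n,
    cartanInt e (resOf e κ (pos (j + 1))) (resOf e κ (pos (k + 1)))

/-- The defect `(Λ, β) - (β, β)/2` of the block containing `pos`. -/
def defectOf (e ℓ n : ℕ) (κ : ℕ → ℤ) (pos : ℕ → Node) : ℤ :=
  lamBeta e ℓ n κ pos - betaBeta e ℓ n κ pos / 2

/-- The conjugate of a node (for a shape with `ℓ` components). -/
def conjNode (ℓ : ℕ) (x : Node) : Node := (ℓ - 1 - x.1, x.2.2, x.2.1)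

/-- The sequence obtained by swapping places `s` and `s+1`. -/
def swapSeq {e : ℕ} (s : ℕ) (i : ℕ → ZMod e) : ℕ → ZMod e :=
  fun k => if k = s then i (s + 1) else if k = s + 1 then i s else i k


/-- The cyclotomic quiver Hecke (KLR) algebra `R_n^Λ` of type `Γ_e`: an `R`-algebra `A`
with generators satisfying the KLR relations, together with its grading and the graded
anti-involution fixing the generators.  Idempotents are indexed by residue sequences
`i : ℕ → ZMod e` (only the values at `1,…,n` matter); `Λm j = (Λ, α_j)`. -/
structure KLR (R : Type*) [CommRing R] (A : Type*) [Ring A] [Algebra R A]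
    (e n : ℕ) (Λm : ZMod e → ℕ) where
  E : (ℕ → ZMod e) → A
  Y : ℕ → A
  Psi : ℕ → A
  star : A →ₗ[R] A
  GS : ℤ → Submodule R A
  E_ext : ∀ i j : ℕ → ZMod e, (∀ k, 1 ≤ k → k ≤ n → i k = j k) → E i = E j
  orth : ∀ i j : ℕ → ZMod e,
      E i * E j = if (∀ k, 1 ≤ k → k ≤ n → i k = j k) then E i else 0
  sumE : ∀ S : Finset (ℕ → ZMod e),
      (∀ j ∈ S, ∀ j' ∈ S, (∀ k, 1 ≤ k → k ≤ n → j k = j' k) → j = j') →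
      (∀ i : ℕ → ZMod e, ∃ j ∈ S, ∀ k, 1 ≤ k → k ≤ n → i k = j k) →
      ∑ j ∈ S, E j = 1
  cyc : ∀ i : ℕ → ZMod e, Y 1 ^ (Λm (i 1)) * E i = 0
  YE : ∀ (i : ℕ → ZMod e) (r : ℕ), Y r * E i = E i * Y r
  PsiE : ∀ (i : ℕ → ZMod e) (s : ℕ), Psi s * E i = E (swapSeq s i) * Psi s
  YY : ∀ r s, Y r * Y s = Y s * Y r
  PsiY : ∀ r s, 1 ≤ s → s < n → r ≠ s → r ≠ s + 1 → Psi s * Y r = Y r * Psi s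
  PsiPsi : ∀ r s, r + 1 < s ∨ s + 1 < r → Psi r * Psi s = Psi s * Psi r
  PsiYE : ∀ (i : ℕ → ZMod e) (r : ℕ), 1 ≤ r → r < n →
      Psi r * Y (r + 1) * E i =
        (if i r = i (r + 1) then Y r * Psi r + 1 else Y r * Psi r) * E i
  YPsiE : ∀ (i : ℕ → ZMod e) (r : ℕ), 1 ≤ r → r < n →
      Y (r + 1) * Psi r * E i =
        (if i r = i (r + 1) then Psi r * Y r + 1 else Psi r * Y r) * E i
  PsiSq : ∀ (i : ℕ → ZMod e) (r : ℕ), 1 ≤ r → r < n →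
      Psi r * Psi r * E i =
        if i r = i (r + 1) then 0
        else if i (r + 1) ≠ i r + 1 ∧ i (r + 1) ≠ i r - 1 then E i
        else if e ≠ 2 ∧ i (r + 1) = i r + 1 then (Y (r + 1) - Y r) * E i
        else if e ≠ 2 ∧ i (r + 1) = i r - 1 then (Y r - Y (r + 1)) * E i
        else (Y (r + 1) - Y r) * (Y r - Y (r + 1)) * E i
  braid : ∀ (i : ℕ → ZMod e) (r : ℕ), 1 ≤ r → r + 1 < n →
      Psi r * Psi (r + 1) * Psi r * E i =
        (if e ≠ 2 ∧ i (r + 2) = i r ∧ i (r + 1) = i r + 1 then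
            Psi (r + 1) * Psi r * Psi (r + 1) + 1
         else if e ≠ 2 ∧ i (r + 2) = i r ∧ i r = i (r + 1) + 1 then
            Psi (r + 1) * Psi r * Psi (r + 1) - 1
         else if e = 2 ∧ i (r + 2) = i r ∧ i r = i (r + 1) + 1 then
            Psi (r + 1) * Psi r * Psi (r + 1) + Y r - Y (r + 1) - Y (r + 1) + Y (r + 2)
         else Psi (r + 1) * Psi r * Psi (r + 1)) * E i
  star_mul : ∀ a b, star (a * b) = star b * star a
  star_E : ∀ i, star (E i) = E i
  star_Y : ∀ r, star (Y r) = Y r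
  star_Psi : ∀ s, star (Psi s) = Psi s
  E_mem : ∀ i, E i ∈ GS 0
  Y_mem : ∀ r, Y r ∈ GS 2
  Psi_mem : ∀ (i : ℕ → ZMod e) (s : ℕ), Psi s * E i ∈ GS (-(cartanInt e (i s) (i (s + 1))))
  GS_mul : ∀ (d d' : ℤ) (a b : A), a ∈ GS d → b ∈ GS d' → a * b ∈ GS (d + d')

namespace KLR

variable {R : Type*} [CommRing R] {A : Type*} [Ring A] [Algebra R A]
  {e n : ℕ} {Λm : ZMod e → ℕ}

/-- `ψ_{i₁} ⋯ ψ_{i_k}` for a (reduced) word. -/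
def psiWord (Kk : KLR R A e n Λm) (L : List ℕ) : A := (L.map Kk.Psi).prod

/-- The residue sequence of a tableau. -/
def resSeq (e : ℕ) (κ : ℕ → ℤ) (pos : ℕ → Node) : ℕ → ZMod e := fun k => resOf e κ (pos k)

/-- The monomial `y_μ = y_1^{d_1} ⋯ y_n^{d_n}` of Hu–Mathas, where `tpos = t^μ` and
`d_m = d_{A_m}(μ_m)`. -/
def yMu (Kk : KLR R A e n Λm) (ℓ : ℕ) (κ : ℕ → ℤ) (tpos : ℕ → Node) : A :=
  ((List.range n).map fun m0 =>
    Kk.Y (m0 + 1) ^ (dBelow e ℓ n κ (subShape tpos m0) (tpos (m0 + 1))).toNat).prod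

/-- The monomial `y'_μ = y_1^{d'_1} ⋯ y_n^{d'_n}`, computed from `t_{μ'}`, the conjugate
of `tpos = t^μ`, with `d'_m = d^{A'_m}(μ'_m)`. -/
def yMu' (Kk : KLR R A e n Λm) (ℓ : ℕ) (κ : ℕ → ℤ) (tpos : ℕ → Node) : A :=
  ((List.range n).map fun m0 =>
    Kk.Y (m0 + 1) ^
      (dAbove e ℓ n κ (subShape (fun k => conjNode ℓ (tpos k)) m0)
        (conjNode ℓ (tpos (m0 + 1)))).toNat).prod

/-- The Hu–Mathas basis element `ψ_{st} = ψ_{d(s)}^⋆ e_μ y_μ ψ_{d(t)}`, where `tpos = t^μ`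
and `ws, wt` are the chosen reduced words for `d(s), d(t)`. -/
def psiST (Kk : KLR R A e n Λm) (ℓ : ℕ) (κ : ℕ → ℤ) (tpos : ℕ → Node)
    (ws wt : List ℕ) : A :=
  Kk.star (Kk.psiWord ws) * Kk.E (resSeq e κ tpos) * Kk.yMu ℓ κ tpos * Kk.psiWord wt

/-- The dual basis element `ψ'_{st} = ψ_{d(s)}^⋆ e'_μ y'_μ ψ_{d(t)}`, where
`e'_μ = e(res(t_{μ'}))` and `t_{μ'}` is the conjugate of `tpos = t^μ`. -/
def psiST' (Kk : KLR R A e n Λm) (ℓ : ℕ) (κ : ℕ → ℤ) (tpos : ℕ → Node)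
    (ws wt : List ℕ) : A :=
  Kk.star (Kk.psiWord ws) * Kk.E (resSeq e κ fun k => conjNode ℓ (tpos k)) *
    Kk.yMu' ℓ κ tpos * Kk.psiWord wt

end KLR


/-!
Write `v = t^ν · d(v)`. Since `t^ν` numbers the nodes in reading order, an entry `k` of `v` lies
in a row before row `(l, i)` exactly when `d(v) k ≤ P`, where `P` is the number of nodes of `ν`
before that row. So `v ⊵ v̂` says that the rank counts `#{k ≤ m | d k ≤ P}` of `d(v)` are at least
those of `d(v̂)` whenever `P` is a row boundary. Row standardness makes `d(v)⁻¹` increase along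
each row of `t^ν`, so between two consecutive boundaries these counts grow with slope one until
they level off, and the inequality at the boundaries propagates to every `P`. What remains is
Ehresmann's tableau criterion: `u ≤ w` in the Bruhat order iff
`#{k ≤ m | w k ≤ P} ≤ #{k ≤ m | u k ≤ P}` for all `m, P`. One half is the subword property, the
other an induction on the length of `w` that removes a right descent of `w`.
-/

open Finset

section Permutations

variable {a b n r : ℕ} {u w : Equiv.Perm ℕ}

lemma FixesOutside.mul (hu : FixesOutside u a b) (hw : FixesOutside w a b) :
    FixesOutside (u * w) a b := fun k hk => by
  rw [Equiv.Perm.mul_apply, hw k hk, hu k hk]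

lemma FixesOutside.inv (hw : FixesOutside w a b) : FixesOutside w⁻¹ a b := fun k hk => by
  rw [Equiv.Perm.inv_eq_iff_eq, hw k hk]

lemma FixesOutside.apply_mem_Icc (hw : FixesOutside w a b) {k : ℕ} (hk : k ∈ Icc a b) :
    w k ∈ Icc a b := by
  by_contra h
  have hfix : w k = k := w.injective (hw (w k) (by simp only [mem_Icc] at h; omega))
  exact h (by rwa [hfix])

lemma FixesOutside.apply_zero (hw : FixesOutside w 1 b) : w 0 = 0 := hw 0 (Or.inl one_pos)

lemma fixesOutside_swapP (h1 : 1 ≤ r) (h2 : r < n) : FixesOutside (swapP r) 1 n :=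
  fun _ _ => Equiv.swap_apply_of_ne_of_ne (by omega) (by omega)

lemma swapP_mul_swapP (r : ℕ) : swapP r * swapP r = 1 := Equiv.swap_mul_self _ _

lemma mul_swapP_apply_left (w : Equiv.Perm ℕ) (r : ℕ) : (w * swapP r) r = w (r + 1) := by
  simp [swapP]

lemma mul_swapP_apply_right (w : Equiv.Perm ℕ) (r : ℕ) : (w * swapP r) (r + 1) = w r := by
  simp [swapP]

lemma eq_one_of_forall_apply_le (h : ∀ k, u k ≤ k) : u = 1 := by
  refine Equiv.ext fun k => show u k = k from ?_
  induction k using Nat.strong_induction_on with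
  | _ k ih =>
    by_contra hne
    have hlt : u k < k := lt_of_le_of_ne (h k) hne
    exact hne (u.injective (ih _ hlt))

lemma FixesOutside.exists_descent (hw : FixesOutside w 1 n) (hne : w ≠ 1) :
    ∃ r, 1 ≤ r ∧ r < n ∧ w (r + 1) < w r := by
  by_contra! hasc
  have hle : ∀ k, k ≤ w k := by
    intro k
    induction k with
    | zero => exact Nat.zero_le _
    | succ k ih =>
      by_cases hk : k + 1 ≤ n
      · rcases Nat.eq_zero_or_pos k with rfl | hk0
        · exact (mem_Icc.mp (hw.apply_mem_Icc (k := 1) (mem_Icc.mpr ⟨le_rfl, hk⟩))).1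
        · have := w.injective.ne (show k ≠ k + 1 by omega)
          have := hasc k hk0 (by omega)
          omega
      · exact (hw (k + 1) (by omega)).ge
  have hinv : w⁻¹ = 1 := eq_one_of_forall_apply_le fun k => by
    simpa using hle (w⁻¹ k)
  exact hne (inv_eq_one.mp hinv)

end Permutations

section Length

variable {n r : ℕ} {w : Equiv.Perm ℕ}

def inversions (n : ℕ) (w : Equiv.Perm ℕ) : Finset (ℕ × ℕ) :=
  (Icc 1 n ×ˢ Icc 1 n).filter fun p => p.1 < p.2 ∧ w p.2 < w p.1

lemma permLength_eq_card_inversions : permLength n w = #(inversions n w) := rfl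

lemma permLength_one (n : ℕ) : permLength n 1 = 0 := by
  rw [permLength_eq_card_inversions, card_eq_zero, inversions, filter_eq_empty_iff]
  intro p _
  simp only [Equiv.Perm.one_apply]
  omega

lemma swapP_image_mem_inversions_erase (h1 : 1 ≤ r) (h2 : r < n) {p : ℕ × ℕ}
    (hp : p ∈ (inversions n w).erase (r, r + 1)) :
    (swapP r p.1, swapP r p.2) ∈ (inversions n (w * swapP r)).erase (r, r + 1) := by
  obtain ⟨a, b⟩ := p
  rw [mem_erase, inversions, mem_filter] at hp ⊢
  simp only [mem_product, mem_Icc, ne_eq, Prod.mk.injEq, Equiv.Perm.mul_apply,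
    Equiv.swap_apply_self, swapP] at hp ⊢
  refine ⟨?_, ⟨?_, ?_⟩, ?_, hp.2.2.2⟩ <;> simp only [Equiv.swap_apply_def] <;> split_ifs <;> omega

lemma card_inversions_mul_swapP_erase (h1 : 1 ≤ r) (h2 : r < n) :
    #((inversions n (w * swapP r)).erase (r, r + 1)) = #((inversions n w).erase (r, r + 1)) := by
  have hinvol : ∀ p : ℕ × ℕ, (swapP r (swapP r p.1), swapP r (swapP r p.2)) = p :=
    fun p => by simp [swapP]
  refine card_nbij' (fun p => (swapP r p.1, swapP r p.2)) (fun p => (swapP r p.1, swapP r p.2))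
    (fun p hp => ?_) (fun p hp => swapP_image_mem_inversions_erase h1 h2 hp)
    (fun p _ => hinvol p) (fun p _ => hinvol p)
  have := swapP_image_mem_inversions_erase (w := w * swapP r) h1 h2 hp
  rwa [mul_assoc, swapP_mul_swapP, mul_one] at this

lemma permLength_mul_swapP_of_lt (h1 : 1 ≤ r) (h2 : r < n) (h : w r < w (r + 1)) :
    permLength n (w * swapP r) = permLength n w + 1 := by
  have hmem : (r, r + 1) ∈ inversions n (w * swapP r) := by
    simp only [inversions, mem_filter, mem_product, mem_Icc, mul_swapP_apply_left,
      mul_swapP_apply_right]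
    omega
  have hnot : (r, r + 1) ∉ inversions n w := by
    simp only [inversions, mem_filter, not_and, not_lt]
    omega
  rw [permLength_eq_card_inversions, permLength_eq_card_inversions,
    ← card_erase_add_one hmem, card_inversions_mul_swapP_erase h1 h2, erase_eq_of_notMem hnot]

lemma permLength_mul_swapP_of_gt (h1 : 1 ≤ r) (h2 : r < n) (h : w (r + 1) < w r) :
    permLength n (w * swapP r) + 1 = permLength n w := by
  have := permLength_mul_swapP_of_lt (w := w * swapP r) h1 h2
    (by rwa [mul_swapP_apply_left, mul_swapP_apply_right])
  rwa [mul_assoc, swapP_mul_swapP, mul_one, eq_comm] at this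

end Length

section ReducedWords

variable {n r : ℕ} {L : List ℕ}

lemma wordProd_append_singleton (L : List ℕ) (r : ℕ) :
    wordProd (L ++ [r]) = wordProd L * swapP r := by
  simp [wordProd]

lemma isReducedWord_nil (n : ℕ) : IsReducedWord n [] :=
  ⟨by simp, by simp [wordProd, permLength_one]⟩

lemma permLength_wordProd_le (hL : ∀ i ∈ L, 1 ≤ i ∧ i < n) :
    permLength n (wordProd L) ≤ L.length := by
  induction L using List.reverseRecOn with
  | nil => simp [wordProd, permLength_one]
  | append_singleton L r ih =>
    have hr := hL r (by simp)
    have hLlen := ih fun i hi => hL i (by simp [hi])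
    rw [wordProd_append_singleton, List.length_append, List.length_singleton]
    rcases lt_or_gt_of_ne ((wordProd L).injective.ne (show r ≠ r + 1 by omega)) with h | h
    · rw [permLength_mul_swapP_of_lt hr.1 hr.2 h]; omega
    · have := permLength_mul_swapP_of_gt hr.1 hr.2 h; omega

lemma isReducedWord_append_singleton_iff :
    IsReducedWord n (L ++ [r]) ↔
      IsReducedWord n L ∧ 1 ≤ r ∧ r < n ∧ wordProd L r < wordProd L (r + 1) := by
  simp only [IsReducedWord, List.mem_append, List.mem_singleton, wordProd_append_singleton,
    List.length_append, List.length_singleton]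
  constructor
  · rintro ⟨hmem, hlen⟩
    have hL : ∀ i ∈ L, 1 ≤ i ∧ i < n := fun i hi => hmem i (Or.inl hi)
    obtain ⟨hr1, hrn⟩ := hmem r (Or.inr rfl)
    have hle := permLength_wordProd_le hL
    rcases lt_or_gt_of_ne ((wordProd L).injective.ne (show r ≠ r + 1 by omega)) with h | h
    · rw [permLength_mul_swapP_of_lt hr1 hrn h] at hlen
      exact ⟨⟨hL, by omega⟩, hr1, hrn, h⟩
    · have := permLength_mul_swapP_of_gt hr1 hrn h
      omega
  · rintro ⟨⟨hL, hlen⟩, hr1, hrn, h⟩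
    refine ⟨fun i hi => hi.elim (hL i) fun e => e ▸ ⟨hr1, hrn⟩, ?_⟩
    rw [permLength_mul_swapP_of_lt hr1 hrn h, hlen]

end ReducedWords

section Bruhat

variable {n r : ℕ} {u w : Equiv.Perm ℕ}

lemma bruhatLE_one (n : ℕ) : BruhatLE n 1 1 :=
  ⟨[], [], isReducedWord_nil n, rfl, List.Sublist.slnil, isReducedWord_nil n, rfl⟩

lemma BruhatLE.le_mul_swapP (h : BruhatLE n u w) (h1 : 1 ≤ r) (h2 : r < n)
    (hw : w r < w (r + 1)) : BruhatLE n u (w * swapP r) := by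
  obtain ⟨ww, uw, hww, rfl, hsub, huw, rfl⟩ := h
  exact ⟨ww ++ [r], uw, isReducedWord_append_singleton_iff.mpr ⟨hww, h1, h2, hw⟩,
    wordProd_append_singleton ww r, hsub.trans (List.sublist_append_left ww [r]), huw, rfl⟩

lemma BruhatLE.mul_swapP (h : BruhatLE n u w) (h1 : 1 ≤ r) (h2 : r < n)
    (hu : u r < u (r + 1)) (hw : w r < w (r + 1)) : BruhatLE n (u * swapP r) (w * swapP r) := by
  obtain ⟨ww, uw, hww, rfl, hsub, huw, rfl⟩ := h
  exact ⟨ww ++ [r], uw ++ [r], isReducedWord_append_singleton_iff.mpr ⟨hww, h1, h2, hw⟩,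
    wordProd_append_singleton ww r, hsub.append (List.Sublist.refl [r]),
    isReducedWord_append_singleton_iff.mpr ⟨huw, h1, h2, hu⟩, wordProd_append_singleton uw r⟩

end Bruhat

section RankCount

/-- An entry of the rank matrix of `u`. -/
def rankCount (u : Equiv.Perm ℕ) (m P : ℕ) : ℕ := #((Icc 1 m).filter fun k => u k ≤ P)

/-- The rank-matrix (Ehresmann) form of the Bruhat order `u ≤ w`. -/
def RankLE (u w : Equiv.Perm ℕ) : Prop := ∀ m P, rankCount w m P ≤ rankCount u m P

variable {m P r : ℕ} {u v w : Equiv.Perm ℕ}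

lemma RankLE.refl (u : Equiv.Perm ℕ) : RankLE u u := fun _ _ => le_rfl

lemma RankLE.trans (huv : RankLE u v) (hvw : RankLE v w) : RankLE u w :=
  fun m P => (hvw m P).trans (huv m P)

@[simp] lemma rankCount_zero_left (u : Equiv.Perm ℕ) (P : ℕ) : rankCount u 0 P = 0 := by
  simp [rankCount]

lemma rankCount_succ (u : Equiv.Perm ℕ) (m P : ℕ) :
    rankCount u (m + 1) P = rankCount u m P + if u (m + 1) ≤ P then 1 else 0 := by
  have hIcc : Icc 1 (m + 1) = insert (m + 1) (Icc 1 m) := by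
    ext x; simp only [mem_Icc, mem_insert]; omega
  rw [rankCount, hIcc, filter_insert]
  split_ifs
  · rw [card_insert_of_notMem (by simp)]; rfl
  · rfl

lemma rankCount_mul_swapP_of_ne (u : Equiv.Perm ℕ) (P : ℕ) (hr : 1 ≤ r) (hm : m ≠ r) :
    rankCount (u * swapP r) m P = rankCount u m P := by
  have hmaps : ∀ k ∈ Icc 1 m, swapP r k ∈ Icc 1 m := fun k hk => by
    simp only [mem_Icc, swapP, Equiv.swap_apply_def] at hk ⊢
    split_ifs <;> omega
  rw [rankCount, rankCount]
  refine card_nbij' (swapP r) (swapP r) (fun k hk => ?_) (fun k hk => ?_)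
    (fun k _ => Equiv.swap_apply_self _ _ k) (fun k _ => Equiv.swap_apply_self _ _ k)
  all_goals
    obtain ⟨hk, hkP⟩ := mem_filter.mp (Finset.mem_coe.mp hk)
    refine Finset.mem_coe.mpr (mem_filter.mpr ⟨hmaps k hk, ?_⟩)
  · exact hkP
  · rwa [Equiv.Perm.mul_apply, swapP, Equiv.swap_apply_self]

lemma rankCount_eq_sub_one_add (u : Equiv.Perm ℕ) (P : ℕ) (hr : 1 ≤ r) :
    rankCount u r P = rankCount u (r - 1) P + if u r ≤ P then 1 else 0 := by
  obtain ⟨j, rfl⟩ : ∃ j, r = j + 1 := ⟨r - 1, by omega⟩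
  rw [rankCount_succ, Nat.add_sub_cancel]

lemma rankCount_mul_swapP_self (u : Equiv.Perm ℕ) (P : ℕ) (hr : 1 ≤ r) :
    rankCount (u * swapP r) r P = rankCount u (r - 1) P + if u (r + 1) ≤ P then 1 else 0 := by
  rw [rankCount_eq_sub_one_add _ P hr, mul_swapP_apply_left,
    rankCount_mul_swapP_of_ne u P hr (by omega)]

end RankCount

section RankLE

variable {n r : ℕ} {u w : Equiv.Perm ℕ}

lemma rankLE_mul_swapP_self (hr : 1 ≤ r) (hw : w r < w (r + 1)) : RankLE w (w * swapP r) := by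
  intro m P
  by_cases hm : m = r
  · subst hm
    rw [rankCount_mul_swapP_self w P hr, rankCount_eq_sub_one_add w P hr]
    split_ifs <;> omega
  · rw [rankCount_mul_swapP_of_ne w P hr hm]

lemma RankLE.mul_swapP (h : RankLE u w) (hr : 1 ≤ r)
    (hs : u r < u (r + 1) ∧ w r < w (r + 1) ∨ u (r + 1) < u r ∧ w (r + 1) < w r) :
    RankLE (u * swapP r) (w * swapP r) := by
  intro m P
  by_cases hm : m = r
  · subst hm
    rw [rankCount_mul_swapP_self u P hr, rankCount_mul_swapP_self w P hr]
    have hprev := h (m - 1) P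
    have hnext := h (m + 1) P
    rw [rankCount_succ, rankCount_succ, rankCount_eq_sub_one_add u P hr,
      rankCount_eq_sub_one_add w P hr] at hnext
    rcases hs with ⟨hu, hw⟩ | ⟨hu, hw⟩ <;> split_ifs at hnext ⊢ <;> omega
  · rw [rankCount_mul_swapP_of_ne u P hr hm, rankCount_mul_swapP_of_ne w P hr hm]
    exact h m P

lemma RankLE.le_mul_swapP (h : RankLE u w) (hr : 1 ≤ r) (hu : u r < u (r + 1))
    (hw : w (r + 1) < w r) : RankLE u (w * swapP r) := by
  intro m P
  by_cases hm : m = r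
  · subst hm
    rw [rankCount_mul_swapP_self w P hr, rankCount_eq_sub_one_add u P hr]
    have hprev := h (m - 1) P
    have hnext := h (m + 1) P
    rw [rankCount_succ, rankCount_succ, rankCount_eq_sub_one_add u P hr,
      rankCount_eq_sub_one_add w P hr] at hnext
    split_ifs at hnext ⊢ <;> omega
  · rw [rankCount_mul_swapP_of_ne w P hr hm]
    exact h m P

lemma rankLE_of_sublist {ww uw : List ℕ} (hww : IsReducedWord n ww) (huw : IsReducedWord n uw)
    (hsub : uw.Sublist ww) : RankLE (wordProd uw) (wordProd ww) := by
  induction ww using List.reverseRecOn generalizing uw with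
  | nil => rw [List.sublist_nil.mp hsub]; exact RankLE.refl _
  | append_singleton ww r ih =>
    obtain ⟨hww', hr1, -, hasc⟩ := isReducedWord_append_singleton_iff.mp hww
    rw [wordProd_append_singleton]
    obtain ⟨uw₁, uw₂, rfl, hsub₁, hsub₂⟩ := List.sublist_append_iff.mp hsub
    rcases List.sublist_singleton.mp hsub₂ with rfl | rfl
    · rw [List.append_nil] at huw ⊢
      exact (ih hww' huw hsub₁).trans (rankLE_mul_swapP_self hr1 hasc)
    · obtain ⟨huw', -, -, hasc'⟩ := isReducedWord_append_singleton_iff.mp huw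
      rw [wordProd_append_singleton]
      exact (ih hww' huw' hsub₁).mul_swapP hr1 (Or.inl ⟨hasc', hasc⟩)

lemma BruhatLE.rankLE (h : BruhatLE n u w) : RankLE u w := by
  obtain ⟨ww, uw, hww, rfl, hsub, huw, rfl⟩ := h
  exact rankLE_of_sublist hww huw hsub

lemma eq_one_of_rankLE_one (hu : FixesOutside u 1 n) (h : RankLE u 1) : u = 1 := by
  refine eq_one_of_forall_apply_le fun k => ?_
  rcases Nat.eq_zero_or_pos k with rfl | hk
  · exact hu.apply_zero.le
  have hall : rankCount 1 k k = #(Icc 1 k) := by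
    rw [rankCount, filter_true_of_mem fun x hx =>
      show (1 : Equiv.Perm ℕ) x ≤ k from (mem_Icc.mp hx).2]
  have hcard : #((Icc 1 k).filter fun x => u x ≤ k) = #(Icc 1 k) :=
    le_antisymm (card_filter_le _ _) (hall ▸ h k k)
  exact filter_card_eq hcard k (mem_Icc.mpr ⟨hk, le_rfl⟩)

/-- Induct on the length of `w`: for a right descent `r` of `w`, compare `w s_r` with `u`, or with
`u s_r` when `r` is also a descent of `u`. -/
lemma bruhatLE_of_rankLE (hu : FixesOutside u 1 n) (hw : FixesOutside w 1 n) (h : RankLE u w) :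
    BruhatLE n u w := by
  induction hN : permLength n w using Nat.strong_induction_on generalizing u w with
  | _ N ih =>
  by_cases hw1 : w = 1
  · subst hw1
    obtain rfl := eq_one_of_rankLE_one hu h
    exact bruhatLE_one n
  obtain ⟨r, hr1, hrn, hdesc⟩ := hw.exists_descent hw1
  have hlen := permLength_mul_swapP_of_gt hr1 hrn hdesc
  have hws := hw.mul (fixesOutside_swapP hr1 hrn)
  have hws_asc : (w * swapP r) r < (w * swapP r) (r + 1) := by
    rwa [mul_swapP_apply_left, mul_swapP_apply_right]
  rcases lt_or_gt_of_ne (u.injective.ne (show r ≠ r + 1 by omega)) with hasc | hudesc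
  · have := (ih _ (by omega) hu hws (h.le_mul_swapP hr1 hasc hdesc) rfl).le_mul_swapP hr1 hrn
      hws_asc
    rwa [mul_assoc, swapP_mul_swapP, mul_one] at this
  · have hus_asc : (u * swapP r) r < (u * swapP r) (r + 1) := by
      rwa [mul_swapP_apply_left, mul_swapP_apply_right]
    have := (ih _ (by omega) (hu.mul (fixesOutside_swapP hr1 hrn)) hws
      (h.mul_swapP hr1 (Or.inr ⟨hudesc, hdesc⟩)) rfl).mul_swapP hr1 hrn hus_asc hws_asc
    rwa [mul_assoc, swapP_mul_swapP, mul_one, mul_assoc, swapP_mul_swapP, mul_one] at this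

theorem bruhatLE_iff_rankLE (hu : FixesOutside u 1 n) (hw : FixesOutside w 1 n) :
    BruhatLE n u w ↔ RankLE u w :=
  ⟨BruhatLE.rankLE, bruhatLE_of_rankLE hu hw⟩

end RankLE

section Interpolation

variable {p : ℕ → Prop} [DecidablePred p] {Q R P x : ℕ}

lemma iff_le_add_card_filter_Ioc (hp : ∀ b c, Q < b → b ≤ c → c ≤ R → p c → p b)
    (hx : x ∈ Ioc Q R) : p x ↔ x ≤ Q + #((Ioc Q R).filter p) := by
  rw [mem_Ioc] at hx
  constructor
  · intro hpx
    have hsub : Ioc Q x ⊆ (Ioc Q R).filter p := fun y hy => by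
      rw [mem_Ioc] at hy
      exact mem_filter.mpr ⟨mem_Ioc.mpr ⟨hy.1, by omega⟩, hp y x hy.1 hy.2 hx.2 hpx⟩
    have := card_le_card hsub
    rw [Nat.card_Ioc] at this
    omega
  · intro hle
    by_contra hpx
    have hsub : (Ioc Q R).filter p ⊆ Ioc Q (x - 1) := fun y hy => by
      obtain ⟨hy, hpy⟩ := mem_filter.mp hy
      rw [mem_Ioc] at hy ⊢
      by_contra hyx
      exact hpx (hp x y hx.1 (by omega) hy.2 hpy)
    have := card_le_card hsub
    rw [Nat.card_Ioc] at this
    omega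

lemma card_filter_Ioc_eq_min (hp : ∀ b c, Q < b → b ≤ c → c ≤ R → p c → p b) (hPR : P ≤ R) :
    #((Ioc Q P).filter p) = min (P - Q) #((Ioc Q R).filter p) := by
  have hset : (Ioc Q P).filter p = Ioc Q (min P (Q + #((Ioc Q R).filter p))) := by
    ext y
    simp only [mem_filter, mem_Ioc, le_min_iff]
    constructor
    · rintro ⟨hy, hpy⟩
      exact ⟨hy.1, hy.2, (iff_le_add_card_filter_Ioc hp (mem_Ioc.mpr ⟨hy.1, hy.2.trans hPR⟩)).mp hpy⟩
    · rintro ⟨hQy, hyP, hy⟩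
      exact ⟨⟨hQy, hyP⟩, (iff_le_add_card_filter_Ioc hp (mem_Ioc.mpr ⟨hQy, hyP.trans hPR⟩)).mpr hy⟩
  rw [hset, Nat.card_Ioc]
  omega

end Interpolation

section RankCountInterpolation

variable {n m P Q R : ℕ} {u w : Equiv.Perm ℕ}

lemma rankCount_eq_card_filter_inv (hu : u 0 = 0) :
    rankCount u m P = #((Ioc 0 P).filter fun b => u⁻¹ b ≤ m) := by
  have hpos : ∀ x : Equiv.Perm ℕ, x 0 = 0 → ∀ k, 0 < k → 0 < x k := fun x hx k hk =>
    Nat.pos_of_ne_zero fun h => hk.ne' (x.injective (h.trans hx.symm))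
  have hu' : u⁻¹ 0 = 0 := by rw [Equiv.Perm.inv_eq_iff_eq, hu]
  rw [rankCount]
  refine card_nbij' u ⇑u⁻¹ (fun k hk => ?_) (fun b hb => ?_)
    (fun k _ => u.symm_apply_apply k) (fun b _ => u.apply_symm_apply b)
  · obtain ⟨hk, hkP⟩ := mem_filter.mp (Finset.mem_coe.mp hk)
    rw [mem_Icc] at hk
    exact Finset.mem_coe.mpr (mem_filter.mpr ⟨mem_Ioc.mpr ⟨hpos u hu k (by omega), hkP⟩,
      by simpa using hk.2⟩)
  · obtain ⟨hb, hbm⟩ := mem_filter.mp (Finset.mem_coe.mp hb)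
    rw [mem_Ioc] at hb
    exact Finset.mem_coe.mpr (mem_filter.mpr ⟨mem_Icc.mpr ⟨hpos _ hu' b hb.1, hbm⟩,
      by simpa using hb.2⟩)

lemma rankCount_eq_add_card_filter (hu : u 0 = 0) (hQP : Q ≤ P) :
    rankCount u m P = rankCount u m Q + #((Ioc Q P).filter fun b => u⁻¹ b ≤ m) := by
  rw [rankCount_eq_card_filter_inv hu, rankCount_eq_card_filter_inv hu,
    ← Ioc_union_Ioc_eq_Ioc (Nat.zero_le Q) hQP, filter_union, card_union_of_disjoint]
  exact disjoint_filter_filter (Ioc_disjoint_Ioc.mpr (by omega))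

lemma rankCount_eq_add_min (hu : u 0 = 0) (hinc : ∀ b c, Q < b → b < c → c ≤ R → u⁻¹ b < u⁻¹ c)
    (hQP : Q ≤ P) (hPR : P ≤ R) :
    rankCount u m P = rankCount u m Q + min (P - Q) (rankCount u m R - rankCount u m Q) := by
  have hdown : ∀ b c, Q < b → b ≤ c → c ≤ R → u⁻¹ c ≤ m → u⁻¹ b ≤ m := fun b c hb hbc hc hcm =>
    hbc.eq_or_lt.elim (fun h => h ▸ hcm) fun h => (hinc b c hb h hc).le.trans hcm
  rw [rankCount_eq_add_card_filter hu hQP, rankCount_eq_add_card_filter hu (hQP.trans hPR),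
    Nat.add_sub_cancel_left, card_filter_Ioc_eq_min hdown hPR]

lemma rankCount_le_of_endpoints (hu : u 0 = 0) (hw : w 0 = 0)
    (hu_inc : ∀ b c, Q < b → b < c → c ≤ R → u⁻¹ b < u⁻¹ c)
    (hw_inc : ∀ b c, Q < b → b < c → c ≤ R → w⁻¹ b < w⁻¹ c)
    (hQ : rankCount w m Q ≤ rankCount u m Q) (hR : rankCount w m R ≤ rankCount u m R)
    (hQP : Q ≤ P) (hPR : P ≤ R) : rankCount w m P ≤ rankCount u m P := by
  rw [rankCount_eq_add_min hu hu_inc hQP hPR, rankCount_eq_add_min hw hw_inc hQP hPR]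
  omega

lemma rankCount_eq_self_of_le (hu : FixesOutside u 1 n) (hm : m ≤ n) (hP : n ≤ P) :
    rankCount u m P = m := by
  rw [rankCount, filter_true_of_mem fun k hk => ?_, Nat.card_Icc, Nat.add_sub_cancel]
  rw [mem_Icc] at hk
  have := mem_Icc.mp (hu.apply_mem_Icc (mem_Icc.mpr ⟨hk.1, hk.2.trans hm⟩))
  omega

lemma rankLE_of_forall_mem_Icc (hu : FixesOutside u 1 n) (hw : FixesOutside w 1 n)
    (h : ∀ m ∈ Icc 1 n, ∀ P ∈ Icc 1 n, rankCount w m P ≤ rankCount u m P) : RankLE u w := by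
  have hle : ∀ m ≤ n, ∀ P, rankCount w m P ≤ rankCount u m P := by
    intro m hm P
    rcases Nat.eq_zero_or_pos m with rfl | hm0
    · simp
    rcases Nat.eq_zero_or_pos P with rfl | hP0
    · simp [rankCount_eq_card_filter_inv hu.apply_zero, rankCount_eq_card_filter_inv hw.apply_zero]
    rcases le_or_gt P n with hPn | hnP
    · exact h m (mem_Icc.mpr ⟨hm0, hm⟩) P (mem_Icc.mpr ⟨hP0, hPn⟩)
    · rw [rankCount_eq_self_of_le hu hm hnP.le, rankCount_eq_self_of_le hw hm hnP.le]
  intro m P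
  induction m with
  | zero => simp
  | succ m ih =>
    rcases le_or_gt (m + 1) n with hm | hm
    · exact hle _ hm P
    · rw [rankCount_succ, rankCount_succ, hu (m + 1) (Or.inr hm), hw (m + 1) (Or.inr hm)]
      omega

end RankCountInterpolation

section Tableaux

def PrecedesRow (x : Node) (l i : ℕ) : Prop := x.1 < l ∨ (x.1 = l ∧ x.2.1 < i)

lemma sum_card_filter_eq_card_filter_lt {α : Type*} (s : Finset α) (f : α → ℕ) (l : ℕ) :
    ∑ k ∈ range l, #(s.filter fun a => f a = k) = #(s.filter fun a => f a < l) := by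
  rw [card_eq_sum_card_fiberwise (f := f) (t := range l) fun a ha => by
    simpa using (mem_filter.mp ha).2]
  refine sum_congr rfl fun k hk => ?_
  rw [filter_filter]
  refine congrArg card (filter_congr fun a _ => ?_)
  have := mem_range.mp hk
  exact ⟨fun h => ⟨h ▸ this, h⟩, And.right⟩

lemma tabPsum_eq_card (pos : ℕ → Node) (m l i : ℕ) :
    tabPsum pos m l i = #((Icc 1 m).filter fun k => PrecedesRow (pos k) l i) := by
  have hcnt : ∀ j, cnt pos m l j =
      #(((Icc 1 m).filter fun k => (pos k).1 = l).filter fun k => (pos k).2.1 = j) := fun j => by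
    rw [cnt, filter_filter]
  simp only [tabPsum, compcnt, hcnt]
  rw [sum_card_filter_eq_card_filter_lt _ (fun k => (pos k).1),
    sum_card_filter_eq_card_filter_lt _ (fun k => (pos k).2.1), filter_filter,
    ← card_union_of_disjoint (disjoint_filter.mpr fun k _ h1 h2 => by omega), ← filter_or]
  exact congrArg card (filter_congr fun k _ => Iff.rfl)

def NodeLexStrictMono (n : ℕ) (tnu : ℕ → Node) : Prop :=
  ∀ j k, 1 ≤ j → j < k → k ≤ n → nodeLex (tnu j) (tnu k)

lemma IsRowReading.nodeLexStrictMono {ℓ n : ℕ} {nu : Multicomp ℓ n} {tnu : ℕ → Node}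
    (htnu : IsRowReading nu tnu) : NodeLexStrictMono n tnu :=
  fun j k hj hjk hk => (htnu.2 j k hj (by omega) (by omega) hk).mp hjk

variable {ℓ n m l i : ℕ} {nu : Multicomp ℓ n} {tnu v vh : ℕ → Node} {d dh : Equiv.Perm ℕ}

lemma tabPsum_le (pos : ℕ → Node) (l i : ℕ) : tabPsum pos n l i ≤ n := by
  rw [tabPsum_eq_card]
  exact (card_filter_le _ _).trans (by simp)

lemma precedesRow_iff_le_tabPsum (hread : NodeLexStrictMono n tnu)
    {b : ℕ} (hb : b ∈ Icc 1 n) : PrecedesRow (tnu b) l i ↔ b ≤ tabPsum tnu n l i := by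
  have hIcc : Icc 1 n = Ioc 0 n := by ext; simp only [mem_Icc, mem_Ioc]; omega
  have hdown : ∀ b c, 0 < b → b ≤ c → c ≤ n →
      PrecedesRow (tnu c) l i → PrecedesRow (tnu b) l i := fun b c hb hbc hc h => by
    rcases hbc.eq_or_lt with rfl | hlt
    · exact h
    · have := hread b c hb hlt hc
      unfold nodeLex at this
      unfold PrecedesRow at h ⊢
      omega
  rw [tabPsum_eq_card, hIcc, iff_le_add_card_filter_Ioc hdown (hIcc ▸ hb), zero_add]

lemma tabPsum_eq_rankCount (hread : NodeLexStrictMono n tnu)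
    (hd : IsDPerm n tnu v d) (hm : m ≤ n) (l i : ℕ) :
    tabPsum v m l i = rankCount d m (tabPsum tnu n l i) := by
  rw [tabPsum_eq_card, rankCount]
  refine congrArg card (filter_congr fun k hk => ?_)
  have hk' : k ∈ Icc 1 n := by simp only [mem_Icc] at hk ⊢; omega
  rw [hd.2 k (mem_Icc.mp hk').1 (mem_Icc.mp hk').2]
  exact precedesRow_iff_le_tabPsum hread (hd.1.apply_mem_Icc hk')

lemma row_eq_of_mem_Ioc (hread : NodeLexStrictMono n tnu) {x : ℕ}
    (hx : x ∈ Ioc (tabPsum tnu n l i) (tabPsum tnu n l (i + 1))) :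
    (tnu x).1 = l ∧ (tnu x).2.1 = i := by
  rw [mem_Ioc] at hx
  have hx' : x ∈ Icc 1 n := mem_Icc.mpr ⟨by omega, hx.2.trans (tabPsum_le tnu l (i + 1))⟩
  have h1 := (precedesRow_iff_le_tabPsum hread hx' (l := l) (i := i)).not.mpr (by omega)
  have h2 := (precedesRow_iff_le_tabPsum hread hx' (l := l) (i := i + 1)).mpr hx.2
  unfold PrecedesRow at h1 h2
  omega

lemma IsDPerm.apply_inv (hd : IsDPerm n tnu v d) {x : ℕ} (hx : x ∈ Icc 1 n) :
    d⁻¹ x ∈ Icc 1 n ∧ v (d⁻¹ x) = tnu x := by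
  have hx' := hd.1.inv.apply_mem_Icc hx
  refine ⟨hx', ?_⟩
  rw [hd.2 _ (mem_Icc.mp hx').1 (mem_Icc.mp hx').2]
  exact congrArg tnu (d.apply_symm_apply x)

lemma inv_lt_inv_of_mem_row (hread : NodeLexStrictMono n tnu)
    (hv : RowStandard nu v) (hd : IsDPerm n tnu v d) {b c : ℕ} (hb : tabPsum tnu n l i < b)
    (hbc : b < c) (hc : c ≤ tabPsum tnu n l (i + 1)) : d⁻¹ b < d⁻¹ c := by
  have hcn := hc.trans (tabPsum_le tnu l (i + 1))
  obtain ⟨hbl, hbi⟩ := row_eq_of_mem_Ioc hread (mem_Ioc.mpr ⟨hb, by omega⟩)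
  obtain ⟨hcl, hci⟩ := row_eq_of_mem_Ioc hread (mem_Ioc.mpr ⟨by omega, hc⟩)
  have hlex := hread b c (by omega) hbc hcn
  obtain ⟨hb', hvb⟩ := hd.apply_inv (x := b) (mem_Icc.mpr ⟨by omega, by omega⟩)
  obtain ⟨hc', hvc⟩ := hd.apply_inv (x := c) (mem_Icc.mpr ⟨by omega, hcn⟩)
  rw [mem_Icc] at hb' hc'
  unfold nodeLex at hlex
  exact hv.2 _ _ hb'.1 hb'.2 hc'.1 hc'.2 (by rw [hvb, hvc, hbl, hcl]) (by rw [hvb, hvc, hbi, hci])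
    (by rw [hvb, hvc]; omega)

lemma rankLE_of_tabDominates (hread : NodeLexStrictMono n tnu) (hv : RowStandard nu v)
    (hvh : RowStandard nu vh) (hd : IsDPerm n tnu v d) (hdh : IsDPerm n tnu vh dh) (hdom : TabDominates n v vh) :
    RankLE d dh := by
  refine rankLE_of_forall_mem_Icc hd.1 hdh.1 fun m hm P hP => ?_
  obtain ⟨hm1, hmn⟩ := mem_Icc.mp hm
  have hdom' : ∀ j, rankCount dh m (tabPsum tnu n (tnu P).1 j) ≤
      rankCount d m (tabPsum tnu n (tnu P).1 j) := fun j => by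
    rw [← tabPsum_eq_rankCount hread hd hmn, ← tabPsum_eq_rankCount hread hdh hmn]
    exact hdom m _ j hm1 hmn
  -- `P` lies in row `((tnu P).1, (tnu P).2.1)`, between two consecutive row boundaries
  have hlo := (precedesRow_iff_le_tabPsum hread hP (l := (tnu P).1) (i := (tnu P).2.1)).not.mp
    (by simp [PrecedesRow])
  have hhi := (precedesRow_iff_le_tabPsum hread hP (l := (tnu P).1) (i := (tnu P).2.1 + 1)).mp
    (Or.inr ⟨rfl, Nat.lt_succ_self _⟩)
  exact rankCount_le_of_endpoints hd.1.apply_zero hdh.1.apply_zero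
    (fun b c => inv_lt_inv_of_mem_row hread hv hd) (fun b c => inv_lt_inv_of_mem_row hread hvh hdh)
    (hdom' _) (hdom' _) (Nat.le_of_not_le hlo) hhi

end Tableaux

/-- For row standard `ν`-tableaux `v` and `v̂`: `v ⊵ v̂` if and only if
`d(v) ≤ d(v̂)` in the Bruhat order on `S_n`. -/
theorem statement4 {ℓ n : ℕ} (nu : Multicomp ℓ n) (tnu v vh : ℕ → Node)
    (htnu : IsRowReading nu tnu) (hv : RowStandard nu v) (hvh : RowStandard nu vh)
    (dv dvh : Equiv.Perm ℕ) (h1 : IsDPerm n tnu v dv) (h2 : IsDPerm n tnu vh dvh) :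
    TabDominates n v vh ↔ BruhatLE n dv dvh := by
  have hread := htnu.nodeLexStrictMono
  rw [bruhatLE_iff_rankLE h1.1 h2.1]
  refine ⟨rankLE_of_tabDominates hread hv hvh h1 h2, fun hrank m l i _ hm => ?_⟩
  rw [tabPsum_eq_rankCount hread h1 hm, tabPsum_eq_rankCount hread h2 hm]
  exact hrank m _

end SpechtInduction
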